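/- Let f ∈ L²₊(ℝ) and let (h_n) be a sequence of trigonometric polynomials with nonpositive frequencies satisfying ‖h_n‖_∞ ≤ 1 for all n. Then there exists a subsequence (n_j) such that P₊(f·h_{n_j}) converges in L² norm. (Compactness of the Hankel-type operator H_f(h) = P₊(f h).) -/

import Mathlib

open MeasureTheory Complex Filter

/-- `F` is the Fourier–Plancherel transform on `L²(ℝ)`. -/
def IsFourierPlancherel
    (F : Lp ℂ 2 (volume : Measure ℝ) ≃ₗᵢ[ℂ] Lp ℂ 2 (volume : Measure ℝ)) : Prop :=
  ∀ g : Lp ℂ 2 (volume : Measure ℝ), Integrable (⇑g) volume →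
    (⇑(F g)) =ᵐ[volume] fun ξ : ℝ =>
      ((Real.sqrt (2 * Real.pi) : ℂ))⁻¹ * ∫ t : ℝ, Complex.exp (-(Complex.I * ξ * t)) * g t

/-!
Approximate `f` in `L²` by a continuous compactly supported `f₀`, and split `F f₀ = a + b` with
`a` vanishing on `(R, ∞)` and `‖b‖` small. Multiplication by a trigonometric polynomial with
nonpositive frequencies translates Fourier transforms to the left, so `F ((F⁻¹ a) hₙ)` still
vanishes on `(R, ∞)`. Hence, up to `‖f - f₀‖ + ‖b‖`, the transform of `P₊ (f hₙ)` is the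
restriction to `(0, R]` of the Fourier integral of `f₀ hₙ`. These integrals are uniformly bounded
and, `f₀` having compact support, uniformly Lipschitz, so by Arzelà–Ascoli they form a totally
bounded subset of `L²`. The range of `n ↦ P₊ (f hₙ)` is therefore totally bounded, and `L²` is
complete.
-/

open Set Metric
open scoped ENNReal Topology BoundedContinuousFunction

theorem totallyBounded_of_forall_exists_dist_lt {X : Type*} [PseudoMetricSpace X] {s : Set X}
    (h : ∀ ε > 0, ∃ t : Set X, TotallyBounded t ∧ ∀ x ∈ s, ∃ y ∈ t, dist x y < ε) :
    TotallyBounded s := by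
  refine Metric.totallyBounded_iff.2 fun ε hε => ?_
  obtain ⟨t, ht, hst⟩ := h (ε / 2) (half_pos hε)
  obtain ⟨c, hc, htc⟩ := Metric.totallyBounded_iff.1 ht (ε / 2) (half_pos hε)
  refine ⟨c, hc, fun x hx => ?_⟩
  obtain ⟨y, hy, hxy⟩ := hst x hx
  obtain ⟨z, hz, hyz⟩ := mem_iUnion₂.1 (htc hy)
  exact mem_iUnion₂.2 ⟨z, hz, mem_ball.2 (by linarith [dist_triangle x y z, mem_ball.1 hyz])⟩

theorem TotallyBounded.range_of_dist_le_mul {ι X Y : Type*} [PseudoMetricSpace X]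
    [PseudoMetricSpace Y] {f : ι → X} {g : ι → Y} {C : ℝ} (hf : TotallyBounded (range f))
    (hfg : ∀ i j, dist (g i) (g j) ≤ C * dist (f i) (f j)) : TotallyBounded (range g) := by
  refine Metric.totallyBounded_iff.2 fun ε hε => ?_
  have hC : 0 < |C| + 1 := by positivity
  obtain ⟨t, hts, htfin, hcover⟩ :=
    finite_approx_of_totallyBounded hf (ε / (|C| + 1)) (div_pos hε hC)
  choose idx hidx using hts
  have := htfin.to_subtype
  refine ⟨range fun y : t => g (idx y.2), finite_range _, ?_⟩
  rintro _ ⟨i, rfl⟩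
  obtain ⟨y, hy, hiy⟩ := mem_iUnion₂.1 (hcover ⟨i, rfl⟩)
  refine mem_iUnion₂.2 ⟨g (idx hy), ⟨⟨y, hy⟩, rfl⟩, mem_ball.2 ?_⟩
  calc dist (g i) (g (idx hy)) ≤ C * dist (f i) (f (idx hy)) := hfg _ _
    _ ≤ |C| * dist (f i) (f (idx hy)) := by gcongr; exact le_abs_self C
    _ ≤ |C| * (ε / (|C| + 1)) := by
        rw [hidx hy]; gcongr; exact (mem_ball.1 hiy).le
    _ < ε := by
        rw [mul_div_assoc', div_lt_iff₀ hC]; nlinarith [abs_nonneg C]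

theorem TotallyBounded.exists_tendsto_subseq {X : Type*} [PseudoMetricSpace X] [CompleteSpace X]
    {u : ℕ → X} (hu : TotallyBounded (range u)) :
    ∃ φ : ℕ → ℕ, StrictMono φ ∧ ∃ g, Tendsto (u ∘ φ) atTop (𝓝 g) := by
  obtain ⟨g, -, φ, hφ, hlim⟩ :=
    (hu.closure.isCompact_of_isClosed isClosed_closure).tendsto_subseq
      fun n => subset_closure (mem_range_self n)
  exact ⟨φ, hφ, g, hlim⟩

section Lp

variable {α E : Type*} [MeasurableSpace α] {μ : Measure α} [NormedAddCommGroup E] {p : ℝ≥0∞}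

theorem totallyBounded_range_of_equicontinuousOn [TopologicalSpace α] [ProperSpace E]
    [Fact (1 ≤ p)] {ι : Type*} {K s : Set α} (hK : IsCompact K) (hs : MeasurableSet s)
    (hsK : s ⊆ K) (hμs : μ s ≠ ∞) {W : ι → α → E} (hW : EquicontinuousOn W K) {C : ℝ}
    (hC : ∀ i, ∀ x ∈ K, ‖W i x‖ ≤ C) {u : ι → Lp E p μ}
    (hu : ∀ i, u i =ᵐ[μ] s.indicator (W i)) : TotallyBounded (range u) := by
  have : CompactSpace K := isCompact_iff_compactSpace.mp hK
  let V : ι → K →ᵇ E := fun i =>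
    BoundedContinuousFunction.mkOfCompact ⟨K.domRestrict (W i), (hW.continuousOn i).domRestrict⟩
  have hV : Equicontinuous ((↑) : range V → K → E) := by
    rintro x U hU
    filter_upwards [(equicontinuous_restrict_iff W).2 hW x U hU] with y hy
    rintro ⟨_, i, rfl⟩
    exact hy i
  have hVtb : TotallyBounded (range V) :=
    (BoundedContinuousFunction.arzela_ascoli (closedBall 0 C) (isCompact_closedBall 0 C) _
      (by rintro _ x ⟨i, rfl⟩; exact mem_closedBall_zero_iff.2 (hC i x x.2))
      hV).totallyBounded.subset subset_closure
  -- the `Lᵖ` distance of `u i` and `u j` is at most their sup distance on `K` times `‖𝟙_s‖`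
  refine hVtb.range_of_dist_le_mul (C := ‖indicatorConstLp p hs hμs (1 : ℝ)‖) fun i j => ?_
  rw [dist_eq_norm, mul_comm]
  refine Lp.norm_le_mul_norm_of_ae_le_mul ?_
  filter_upwards [Lp.coeFn_sub (u i) (u j), hu i, hu j,
    indicatorConstLp_coeFn (p := p) (hs := hs) (hμs := hμs) (c := (1 : ℝ))] with x hx hi hj h1
  rw [hx, Pi.sub_apply, hi, hj, h1]
  by_cases hxs : x ∈ s
  · simp only [indicator_of_mem hxs, norm_one, mul_one]
    rw [← dist_eq_norm]
    exact BoundedContinuousFunction.dist_coe_le_dist (f := V i) (g := V j) ⟨x, hsK hxs⟩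
  · simp [indicator_of_notMem hxs]

theorem Lp.exists_hasCompactSupport_dist_le [TopologicalSpace α] [NormalSpace α] [R1Space α]
    [WeaklyLocallyCompactSpace α] [BorelSpace α] [NormedSpace ℝ E] [μ.Regular] [Fact (1 ≤ p)]
    (hp : p ≠ ∞) (u : Lp E p μ) {ε : ℝ} (hε : 0 < ε) :
    ∃ g : α → E, Continuous g ∧ HasCompactSupport g ∧
      ∃ v : Lp E p μ, v =ᵐ[μ] g ∧ dist u v ≤ ε := by
  obtain ⟨g, hgs, hug, hgc, hgm⟩ :=
    (Lp.memLp u).exists_hasCompactSupport_eLpNorm_sub_le hp (ENNReal.ofReal_pos.2 hε).ne'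
  refine ⟨g, hgc, hgs, hgm.toLp g, hgm.coeFn_toLp, ?_⟩
  rw [dist_eq_norm, Lp.norm_def,
    eLpNorm_congr_ae ((Lp.coeFn_sub _ _).trans (EventuallyEq.rfl.sub hgm.coeFn_toLp))]
  exact ENNReal.toReal_le_of_le_ofReal hε.le hug

theorem Lp.norm_sub_le_of_ae_eq_indicator [Fact (1 ≤ p)] {s t : Set α} (hs : MeasurableSet s)
    (ht : MeasurableSet t) (hts : t ⊆ s) {H G u A B : Lp E p μ}
    (hH : H =ᵐ[μ] s.indicator u) (hG : G =ᵐ[μ] t.indicator ⇑(A + B))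
    (hA : ∀ᵐ x ∂μ, x ∈ s \ t → A x = 0) : ‖H - G‖ ≤ ‖u - (A + B)‖ + ‖B‖ := by
  have hae : ⇑(H - G) =ᵐ[μ] s.indicator ⇑(u - (A + B)) + (s \ t).indicator ⇑B := by
    filter_upwards [Lp.coeFn_sub H G, hH, hG, Lp.coeFn_sub u (A + B), Lp.coeFn_add A B, hA]
      with x h1 h2 h3 h4 h5 h6
    rw [h1, Pi.sub_apply, h2, h3, Pi.add_apply]
    by_cases hxt : x ∈ t
    · rw [indicator_of_mem (hts hxt), indicator_of_mem hxt, indicator_of_mem (hts hxt),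
        indicator_of_notMem fun h => h.2 hxt, h4, add_zero, Pi.sub_apply]
    by_cases hxs : x ∈ s
    · rw [indicator_of_mem hxs, indicator_of_notMem hxt, indicator_of_mem hxs,
        indicator_of_mem (show x ∈ s \ t from ⟨hxs, hxt⟩), h4, Pi.sub_apply, h5, Pi.add_apply,
        h6 ⟨hxs, hxt⟩]
      abel
    · rw [indicator_of_notMem hxs, indicator_of_notMem hxt, indicator_of_notMem hxs,
        indicator_of_notMem fun h => hxs h.1, sub_zero, add_zero]
  simp only [Lp.norm_def]
  rw [← ENNReal.toReal_add (Lp.eLpNorm_ne_top _) (Lp.eLpNorm_ne_top _)]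
  refine ENNReal.toReal_mono (by finiteness) ?_
  rw [eLpNorm_congr_ae hae]
  exact (eLpNorm_add_le ((Lp.aestronglyMeasurable _).indicator hs)
    ((Lp.aestronglyMeasurable _).indicator (hs.diff ht)) Fact.out).trans
    (add_le_add (eLpNorm_indicator_le _) (eLpNorm_indicator_le _))

variable (𝕜 : Type*) [NormedRing 𝕜] [Module 𝕜 E] [IsBoundedSMul 𝕜 E]

def Lp.vanishingOn (s : Set α) : Submodule 𝕜 (Lp E p μ) where
  carrier := {u | ∀ᵐ x ∂μ, x ∈ s → u x = 0}
  zero_mem' := by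
    filter_upwards [Lp.coeFn_zero E p μ] with x hx _
    rw [hx, Pi.zero_apply]
  add_mem' {u v} hu hv := by
    simp only [mem_ofPred_eq] at hu hv ⊢
    filter_upwards [Lp.coeFn_add u v, hu, hv] with x hx hux hvx hxs
    rw [hx, Pi.add_apply, hux hxs, hvx hxs, add_zero]
  smul_mem' c u hu := by
    simp only [mem_ofPred_eq] at hu ⊢
    filter_upwards [Lp.coeFn_smul c u, hu] with x hx hux hxs
    rw [hx, Pi.smul_apply, hux hxs, smul_zero]

variable {𝕜} in
theorem Lp.mem_vanishingOn {s : Set α} {u : Lp E p μ} :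
    u ∈ Lp.vanishingOn 𝕜 s ↔ ∀ᵐ x ∂μ, x ∈ s → u x = 0 :=
  Iff.rfl

end Lp

section MulOperator

variable {α : Type*} [MeasurableSpace α] {μ : Measure α} {p : ℝ≥0∞} [Fact (1 ≤ p)]

noncomputable def mulOperator (φ : α → ℂ) (hφ : MemLp φ ∞ μ) : Lp ℂ p μ →L[ℂ] Lp ℂ p μ :=
  (ContinuousLinearMap.mul ℂ ℂ).holderL μ ∞ p p (hφ.toLp φ)

theorem coeFn_mulOperator (φ : α → ℂ) (hφ : MemLp φ ∞ μ) (g : Lp ℂ p μ) :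
    mulOperator φ hφ g =ᵐ[μ] fun x => φ x * g x := by
  filter_upwards [(ContinuousLinearMap.mul ℂ ℂ).coeFn_holder (r := p) (hφ.toLp φ) g,
    hφ.coeFn_toLp] with x hx hφx
  simp [mulOperator, hx, hφx]

theorem norm_mulOperator_apply_le {φ : α → ℂ} (hφ : MemLp φ ∞ μ) (hφ1 : ∀ x, ‖φ x‖ ≤ 1)
    (g : Lp ℂ p μ) : ‖mulOperator φ hφ g‖ ≤ ‖g‖ := by
  refine Lp.norm_le_norm_of_ae_le ?_
  filter_upwards [coeFn_mulOperator φ hφ g] with x hx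
  rw [hx, norm_mul]
  exact mul_le_of_le_one_left (norm_nonneg _) (hφ1 x)

end MulOperator

noncomputable section

local notation "L2" => Lp ℂ 2 (volume : Measure ℝ)

theorem norm_exp_I_mul_mul (ω x : ℝ) : ‖exp (I * ω * x)‖ = 1 := by
  rw [norm_exp]; simp

theorem norm_exp_neg_I_mul_mul (ξ t : ℝ) : ‖exp (-(I * ξ * t))‖ = 1 := by
  rw [norm_exp]; simp

theorem memLp_top_exp_I_mul (ω : ℝ) : MemLp (fun x : ℝ => exp (I * ω * x)) ∞ volume :=
  memLp_top_of_bound (by fun_prop : Continuous fun x : ℝ => exp (I * ω * x)).aestronglyMeasurable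
    1 (ae_of_all _ fun x => (norm_exp_I_mul_mul ω x).le)

def modulation (ω : ℝ) : L2 →L[ℂ] L2 := mulOperator _ (memLp_top_exp_I_mul ω)

theorem coeFn_modulation (ω : ℝ) (g : L2) :
    modulation ω g =ᵐ[volume] fun x => exp (I * ω * x) * g x :=
  coeFn_mulOperator _ _ g

def translation (ω : ℝ) : L2 →ₗᵢ[ℂ] L2 :=
  Lp.compMeasurePreservingₗᵢ ℂ (fun ξ => ξ - ω) (measurePreserving_sub_right volume ω)

theorem coeFn_translation (ω : ℝ) (u : L2) :
    translation ω u =ᵐ[volume] fun ξ => u (ξ - ω) :=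
  Lp.coeFn_compMeasurePreserving u _

theorem translation_mem_vanishingOn_Ioi {ω R : ℝ} (hω : ω ≤ 0) {u : L2}
    (hu : u ∈ Lp.vanishingOn ℂ (Ioi R)) : translation ω u ∈ Lp.vanishingOn ℂ (Ioi R) := by
  have h := (measurePreserving_sub_right volume ω).quasiMeasurePreserving.ae
    (Lp.mem_vanishingOn.1 hu)
  rw [Lp.mem_vanishingOn]
  filter_upwards [coeFn_translation ω u, h] with ξ h1 h2 hξ
  rw [h1]
  exact h2 (by simp only [mem_Ioi] at hξ ⊢; linarith)

theorem mulOperator_eq_sum_modulation {ι : Type*} [Fintype ι] (c : ι → ℂ) (ω : ι → ℝ)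
    {φ : ℝ → ℂ} (hφ : MemLp φ ∞ volume) (hφeq : ∀ x, φ x = ∑ k, c k * exp (I * ω k * x)) :
    (mulOperator φ hφ : L2 →L[ℂ] L2) = ∑ k, c k • modulation (ω k) := by
  ext1 g
  refine Lp.ext ?_
  have hterms : ∀ᵐ x ∂volume, ∀ k,
      (c k • modulation (ω k) g) x = c k * (exp (I * ω k * x) * g x) := by
    refine ae_all_iff.2 fun k => ?_
    filter_upwards [Lp.coeFn_smul (c k) (modulation (ω k) g), coeFn_modulation (ω k) g]
      with x h1 h2
    rw [h1, Pi.smul_apply, h2, smul_eq_mul]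
  simp only [sum_apply, smul_apply]
  filter_upwards [coeFn_mulOperator φ hφ g, Lp.coeFn_fun_finsetSum Finset.univ
    (fun k => c k • modulation (ω k) g), hterms] with x h1 h2 h3
  rw [h1, h2, hφeq, Finset.sum_mul]
  exact Finset.sum_congr rfl fun k _ => by rw [h3 k, mul_assoc]

def unitaryFourierIntegral (g : ℝ → ℂ) (ξ : ℝ) : ℂ :=
  ((Real.sqrt (2 * Real.pi) : ℂ))⁻¹ * ∫ t : ℝ, exp (-(I * ξ * t)) * g t

theorem unitaryFourierIntegral_congr_ae {g g' : ℝ → ℂ} (h : g =ᵐ[volume] g') :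
    unitaryFourierIntegral g = unitaryFourierIntegral g' := by
  ext ξ
  unfold unitaryFourierIntegral
  congr 1
  exact integral_congr_ae (h.mono fun t ht => by simp only [ht])

theorem unitaryFourierIntegral_exp_mul (ω : ℝ) (g : ℝ → ℂ) (ξ : ℝ) :
    unitaryFourierIntegral (fun t => exp (I * ω * t) * g t) ξ =
      unitaryFourierIntegral g (ξ - ω) := by
  unfold unitaryFourierIntegral
  congr 2 with t
  rw [← mul_assoc, ← Complex.exp_add]
  push_cast
  ring_nf

theorem norm_inv_sqrt_two_pi_le_one : ‖((Real.sqrt (2 * Real.pi) : ℂ))⁻¹‖ ≤ 1 := by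
  rw [norm_inv, norm_real, Real.norm_of_nonneg (Real.sqrt_nonneg _)]
  refine inv_le_one_of_one_le₀ (Real.one_le_sqrt.2 ?_)
  nlinarith [Real.pi_gt_three]

theorem norm_unitaryFourierIntegral_le (g : ℝ → ℂ) (ξ : ℝ) :
    ‖unitaryFourierIntegral g ξ‖ ≤ ∫ t, ‖g t‖ := by
  rw [unitaryFourierIntegral, norm_mul]
  refine (mul_le_of_le_one_left (norm_nonneg _) norm_inv_sqrt_two_pi_le_one).trans ?_
  refine (norm_integral_le_integral_norm _).trans_eq
    (integral_congr_ae (ae_of_all _ fun t => ?_))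
  simp only [norm_mul, norm_exp_neg_I_mul_mul, one_mul]

theorem dist_unitaryFourierIntegral_le {g : ℝ → ℂ} {G : ℝ → ℝ} (hg : Integrable g)
    (hG : Integrable fun t => |t| * G t) (hgG : ∀ t, ‖g t‖ ≤ G t) (ξ ξ' : ℝ) :
    dist (unitaryFourierIntegral g ξ) (unitaryFourierIntegral g ξ') ≤
      (∫ t, |t| * G t) * dist ξ ξ' := by
  have hint : ∀ ξ : ℝ, Integrable fun t : ℝ => exp (-(I * ξ * t)) * g t := fun ξ =>
    hg.bdd_mul (by fun_prop) (c := 1) (ae_of_all _ fun t => (norm_exp_neg_I_mul_mul ξ t).le)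
  have hpt : ∀ t : ℝ, ‖exp (-(I * ξ * t)) * g t - exp (-(I * ξ' * t)) * g t‖ ≤
      dist ξ ξ' * (|t| * G t) := by
    intro t
    have hfactor : exp (-(I * ξ * t)) - exp (-(I * ξ' * t)) =
        exp (-(I * ξ' * t)) * (exp (I * ↑(-((ξ - ξ') * t))) - 1) := by
      rw [mul_sub, mul_one, ← Complex.exp_add]; push_cast; ring_nf
    rw [← sub_mul, hfactor, norm_mul, norm_mul, norm_exp_neg_I_mul_mul, one_mul, Real.dist_eq]
    have hexp := Real.norm_exp_I_mul_ofReal_sub_one_le (x := -((ξ - ξ') * t))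
    rw [Real.norm_eq_abs, abs_neg, abs_mul] at hexp
    calc _ ≤ |ξ - ξ'| * |t| * G t := mul_le_mul hexp (hgG t) (norm_nonneg _) (by positivity)
      _ = _ := by ring
  rw [dist_eq_norm, unitaryFourierIntegral, unitaryFourierIntegral, ← mul_sub,
    ← integral_sub (hint ξ) (hint ξ'), norm_mul, mul_comm _ (dist ξ ξ'), ← integral_const_mul]
  refine (mul_le_of_le_one_left (norm_nonneg _) norm_inv_sqrt_two_pi_le_one).trans ?_
  exact norm_integral_le_of_norm_le (hG.const_mul _) (ae_of_all _ hpt)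

theorem totallyBounded_range_indicator_unitaryFourierIntegral {ι : Type*} {g : ι → ℝ → ℂ}
    {G : ℝ → ℝ} (hg : ∀ i, Integrable (g i)) (hG : Integrable G)
    (hG' : Integrable fun t => |t| * G t) (hgG : ∀ i t, ‖g i t‖ ≤ G t) (a b : ℝ) {u : ι → L2}
    (hu : ∀ i, u i =ᵐ[volume] (Ioc a b).indicator (unitaryFourierIntegral (g i))) :
    TotallyBounded (range u) := by
  have hlip : ∀ i,
      LipschitzWith (Real.toNNReal (∫ t, |t| * G t)) (unitaryFourierIntegral (g i)) :=
    fun i => LipschitzWith.of_dist_le' (dist_unitaryFourierIntegral_le (hg i) hG' (hgG i))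
  refine totallyBounded_range_of_equicontinuousOn isCompact_Icc measurableSet_Ioc
    Ioc_subset_Icc_self measure_Ioc_lt_top.ne
    ((LipschitzWith.uniformEquicontinuous _ _ hlip).equicontinuous.equicontinuousOn _)
    (fun i ξ _ => (norm_unitaryFourierIntegral_le _ ξ).trans
      (integral_mono (hg i).norm hG (hgG i))) hu

theorem exists_mem_vanishingOn_Ioi_dist_le (w : L2) {ε : ℝ} (hε : 0 < ε) :
    ∃ R, ∃ a ∈ Lp.vanishingOn ℂ (Ioi R), dist w a ≤ ε := by
  obtain ⟨g, -, hgs, a, hag, hwa⟩ :=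
    Lp.exists_hasCompactSupport_dist_le ENNReal.ofNat_ne_top w hε
  obtain ⟨R, hR⟩ := hgs.isCompact.isBounded.subset_closedBall 0
  refine ⟨R, a, ?_, hwa⟩
  filter_upwards [hag] with ξ hξ hξR
  rw [hξ]
  refine image_eq_zero_of_notMem_tsupport fun h => ?_
  have := hR h
  rw [mem_closedBall, Real.dist_0_eq_abs] at this
  linarith [le_abs_self ξ, mem_Ioi.1 hξR]

namespace IsFourierPlancherel

variable {F : L2 ≃ₗᵢ[ℂ] L2}

theorem ae_eq_unitaryFourierIntegral (hF : IsFourierPlancherel F) {g : L2} {g₀ : ℝ → ℂ}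
    (hg : g =ᵐ[volume] g₀) (hg₀ : Integrable g₀) : F g =ᵐ[volume] unitaryFourierIntegral g₀ :=
  (hF g (hg₀.congr hg.symm)).trans (EventuallyEq.of_eq (unitaryFourierIntegral_congr_ae hg))

theorem map_modulation_of_integrable (hF : IsFourierPlancherel F) (ω : ℝ) {g : L2}
    (hg : Integrable g) : F (modulation ω g) = translation ω (F g) := by
  have hint : Integrable fun x : ℝ => exp (I * ω * x) * g x :=
    hg.bdd_mul (memLp_top_exp_I_mul ω).aestronglyMeasurable (c := 1)
      (ae_of_all _ fun x => (norm_exp_I_mul_mul ω x).le)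
  have h2 := (measurePreserving_sub_right volume ω).quasiMeasurePreserving.ae_eq (hF g hg)
  refine Lp.ext ?_
  filter_upwards [hF.ae_eq_unitaryFourierIntegral (coeFn_modulation ω g) hint,
    coeFn_translation ω (F g), h2] with ξ h1 h3 h4
  rw [h1, h3, unitaryFourierIntegral_exp_mul]
  exact h4.symm

theorem map_modulation (hF : IsFourierPlancherel F) (ω : ℝ) (g : L2) :
    F (modulation ω g) = translation ω (F g) := by
  refine Lp.induction (p := 2) ENNReal.ofNat_ne_top
    (motive := fun g => F (modulation ω g) = translation ω (F g)) ?_ ?_ ?_ g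
  · intro c s hs hμs
    refine hF.map_modulation_of_integrable ω ?_
    rw [Lp.simpleFunc.coe_indicatorConst]
    exact ((integrable_indicator_iff hs).2 (integrableOn_const hμs.ne)).congr
      indicatorConstLp_coeFn.symm
  · intro _ _ _ _ _ hf hg
    simp only [map_add, hf, hg]
  · exact isClosed_eq (F.continuous.comp (modulation ω).continuous)
      ((translation ω).continuous.comp F.continuous)

theorem map_mulOperator_mem_vanishingOn_Ioi (hF : IsFourierPlancherel F) {ι : Type*}
    [Fintype ι] (c : ι → ℂ) {ω : ι → ℝ} (hω : ∀ k, ω k ≤ 0) {φ : ℝ → ℂ}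
    (hφ : MemLp φ ∞ volume) (hφeq : ∀ x, φ x = ∑ k, c k * exp (I * ω k * x)) {R : ℝ}
    {g : L2} (hg : F g ∈ Lp.vanishingOn ℂ (Ioi R)) :
    F (mulOperator φ hφ g) ∈ Lp.vanishingOn ℂ (Ioi R) := by
  rw [mulOperator_eq_sum_modulation c ω hφ hφeq]
  simp only [sum_apply, smul_apply, map_sum, map_smul, hF.map_modulation]
  exact Submodule.sum_mem _ fun k _ =>
    Submodule.smul_mem _ _ (translation_mem_vanishingOn_Ioi (hω k) hg)

theorem totallyBounded_range_indicator_mulOperator (hF : IsFourierPlancherel F) {ι : Type*}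
    {φ : ι → ℝ → ℂ} (hφ : ∀ i, MemLp (φ i) ∞ volume) (hφ1 : ∀ i x, ‖φ i x‖ ≤ 1)
    {f₀ : ℝ → ℂ} (hf₀ : Continuous f₀) (hf₀s : HasCompactSupport f₀) {g : L2}
    (hg : g =ᵐ[volume] f₀) (a b : ℝ) {u : ι → L2}
    (hu : ∀ i, u i =ᵐ[volume] (Ioc a b).indicator (F (mulOperator (φ i) (hφ i) g))) :
    TotallyBounded (range u) := by
  have hf₀int : Integrable f₀ := hf₀.integrable_of_hasCompactSupport hf₀s
  have hprod : ∀ i, Integrable fun t => φ i t * f₀ t := fun i =>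
    hf₀int.bdd_mul (hφ i).aestronglyMeasurable (c := 1) (ae_of_all _ (hφ1 i))
  refine totallyBounded_range_indicator_unitaryFourierIntegral hprod hf₀int.norm
    ((continuous_abs.mul hf₀.norm).integrable_of_hasCompactSupport hf₀s.norm.mul_left)
    (fun i t => ?_) a b fun i => (hu i).trans (EventuallyEq.indicator ?_)
  · rw [norm_mul]
    exact mul_le_of_le_one_left (norm_nonneg _) (hφ1 i t)
  · refine hF.ae_eq_unitaryFourierIntegral ?_ (hprod i)
    filter_upwards [coeFn_mulOperator (φ i) (hφ i) g, hg] with x h1 h2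
    rw [h1, h2]

theorem dist_le_of_ae_eq_indicator (hF : IsFourierPlancherel F) {ι : Type*} [Fintype ι]
    (c : ι → ℂ) {ω : ι → ℝ} (hω : ∀ k, ω k ≤ 0) {φ : ℝ → ℂ} (hφ : MemLp φ ∞ volume)
    (hφ1 : ∀ x, ‖φ x‖ ≤ 1) (hφeq : ∀ x, φ x = ∑ k, c k * exp (I * ω k * x)) {R : ℝ}
    {f f₀ a H G : L2} (ha : a ∈ Lp.vanishingOn ℂ (Ioi R))
    (hH : F H =ᵐ[volume] (Ioi 0).indicator (F (mulOperator φ hφ f)))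
    (hG : G =ᵐ[volume] (Ioc 0 R).indicator (F (mulOperator φ hφ f₀))) :
    dist (F H) G ≤ dist f f₀ + dist (F f₀) a := by
  set M := mulOperator φ hφ (p := 2)
  have hsplit : F (M f₀) = F (M (F.symm a)) + F (M (f₀ - F.symm a)) := by
    rw [← map_add, ← map_add, add_sub_cancel]
  have hA : F (M (F.symm a)) ∈ Lp.vanishingOn ℂ (Ioi R) :=
    hF.map_mulOperator_mem_vanishingOn_Ioi c hω hφ hφeq (by rwa [F.apply_symm_apply])
  rw [hsplit] at hG
  calc dist (F H) G
      ≤ ‖F (M f) - F (M f₀)‖ + ‖F (M (f₀ - F.symm a))‖ := by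
        rw [dist_eq_norm, hsplit]
        refine Lp.norm_sub_le_of_ae_eq_indicator measurableSet_Ioi measurableSet_Ioc
          Ioc_subset_Ioi_self hH hG ?_
        filter_upwards [Lp.mem_vanishingOn.1 hA] with ξ hξ hξs
        exact hξ (not_le.1 fun h => hξs.2 ⟨hξs.1, h⟩)
    _ ≤ ‖f - f₀‖ + ‖f₀ - F.symm a‖ := by
        rw [← map_sub, ← map_sub, F.norm_map, F.norm_map]
        exact add_le_add (norm_mulOperator_apply_le hφ hφ1 _)
          (norm_mulOperator_apply_le hφ hφ1 _)
    _ = dist f f₀ + dist (F f₀) a := by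
        rw [dist_eq_norm, dist_eq_norm, ← F.norm_map (f₀ - _), map_sub, F.apply_symm_apply]

end IsFourierPlancherel

end

theorem hankel_compact
    (F : Lp ℂ 2 (volume : Measure ℝ) ≃ₗᵢ[ℂ] Lp ℂ 2 (volume : Measure ℝ))
    (hF : IsFourierPlancherel F)
    (f : Lp ℂ 2 (volume : Measure ℝ))
    (h : ℕ → ℝ → ℂ)
    (hpoly : ∀ n : ℕ, ∃ (m : ℕ) (c : Fin m → ℂ) (lam : Fin m → ℝ),
      (∀ k, lam k ≤ 0) ∧
        ∀ x : ℝ, h n x = ∑ k, c k * Complex.exp (Complex.I * (lam k : ℂ) * (x : ℂ)))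
    (hbd : ∀ n x, ‖h n x‖ ≤ 1)
    (fh : ℕ → Lp ℂ 2 (volume : Measure ℝ))
    (hfh : ∀ n, (⇑(fh n)) =ᵐ[volume] fun x : ℝ => f x * h n x)
    (Hf : ℕ → Lp ℂ 2 (volume : Measure ℝ))
    (hHf : ∀ n, (⇑(F (Hf n))) =ᵐ[volume] Set.indicator (Set.Ioi (0 : ℝ)) (⇑(F (fh n)))) :
    ∃ φ : ℕ → ℕ, StrictMono φ ∧
      ∃ g : Lp ℂ 2 (volume : Measure ℝ), Tendsto (fun j => Hf (φ j)) atTop (nhds g) := by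
  choose m c lam hlam hP using hpoly
  have hmem : ∀ n, MemLp (h n) ∞ volume := fun n =>
    memLp_top_of_bound (by rw [funext (hP n)]; fun_prop : Continuous (h n)).aestronglyMeasurable
      1 (ae_of_all _ (hbd n))
  have hfh' : ∀ n, fh n = mulOperator (h n) (hmem n) f := fun n =>
    Lp.ext ((hfh n).trans ((coeFn_mulOperator _ _ f).trans
      (EventuallyEq.of_eq (funext fun x => mul_comm _ _))).symm)
  suffices htb : TotallyBounded (range fun n => F (Hf n)) by
    have := htb.image F.symm.isometry.uniformContinuous
    rw [← range_comp] at this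
    simpa [Function.comp_def] using this.exists_tendsto_subseq
  refine totallyBounded_of_forall_exists_dist_lt fun ε hε => ?_
  obtain ⟨f₀, hf₀c, hf₀s, f₀L, hf₀L, hff₀⟩ :=
    Lp.exists_hasCompactSupport_dist_le ENNReal.ofNat_ne_top f (by positivity : 0 < ε / 3)
  obtain ⟨R, a, ha, hwa⟩ :=
    exists_mem_vanishingOn_Ioi_dist_le (F f₀L) (by positivity : 0 < ε / 3)
  let G n := ((Lp.memLp (F (mulOperator (h n) (hmem n) f₀L))).indicator
    (measurableSet_Ioc (a := 0) (b := R))).toLp _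
  refine ⟨range G, hF.totallyBounded_range_indicator_mulOperator hmem hbd hf₀c hf₀s hf₀L 0 R
    fun n => MemLp.coeFn_toLp _, ?_⟩
  rintro _ ⟨n, rfl⟩
  refine ⟨G n, mem_range_self n, ?_⟩
  have := hF.dist_le_of_ae_eq_indicator (c n) (hlam n) (hmem n) (hbd n) (hP n) (f₀ := f₀L)
    (G := G n) ha (hfh' n ▸ hHf n) (MemLp.coeFn_toLp _)
  change dist (F (Hf n)) (G n) < ε
  linarith
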